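/- Conversely, if all errors are at least Δ on the incorrect predictions (|yₜ − ŷₜ| ≥ Δ whenever yₜ ≠ ŷₜ) and the accuracy is a, then RMSE ≥ Δ · sqrt(1 − a). -/

import Mathlib

open scoped Classical

open Finset

theorem one_sub_card_filter_div_card {ι : Type*} [Fintype ι] [Nonempty ι] (p : ι → Prop) :
    1 - (#{i | p i} : ℝ) / Fintype.card ι = (#{i | ¬p i} : ℝ) / Fintype.card ι := by
  have hcard : (#{i | p i} : ℝ) + #{i | ¬p i} = Fintype.card ι := by
    exact_mod_cast card_filter_add_card_filter_not (s := univ) p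
  have hpos : (0 : ℝ) < Fintype.card ι := by exact_mod_cast Fintype.card_pos
  field_simp
  linarith

theorem sq_mul_card_ne_le_sum_sq_sub {ι : Type*} [Fintype ι] (y yhat : ι → ℝ) {Δ : ℝ}
    (hΔ : 0 ≤ Δ) (herr : ∀ i, y i ≠ yhat i → Δ ≤ |y i - yhat i|) :
    Δ ^ 2 * #{i | y i ≠ yhat i} ≤ ∑ i, (y i - yhat i) ^ 2 :=
  calc Δ ^ 2 * #{i | y i ≠ yhat i}
      = ∑ i ∈ {i | y i ≠ yhat i}, Δ ^ 2 := by rw [sum_const, nsmul_eq_mul, mul_comm]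
    _ ≤ ∑ i ∈ {i | y i ≠ yhat i}, (y i - yhat i) ^ 2 := by
        refine sum_le_sum fun i hi => ?_
        rw [← sq_abs (y i - yhat i)]
        exact pow_le_pow_left₀ hΔ (herr i (mem_filter.1 hi).2) 2
    _ ≤ ∑ i, (y i - yhat i) ^ 2 := sum_le_univ_sum_of_nonneg fun _ => sq_nonneg _

/-- If every incorrect prediction has absolute error at least `Δ` and the
accuracy is `a`, then `RMSE ≥ Δ √(1 − a)`. -/
theorem rmse_ge_of_accuracy (n : ℕ) (hn : 1 ≤ n) (y yhat : Fin n → ℝ)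
    (a Δ : ℝ) (hΔ : 0 < Δ)
    (ha : a = ((Finset.univ.filter fun t => y t = yhat t).card : ℝ) / n)
    (herr : ∀ t, y t ≠ yhat t → Δ ≤ |y t - yhat t|) :
    Δ * Real.sqrt (1 - a) ≤ Real.sqrt ((n : ℝ)⁻¹ * ∑ t, (y t - yhat t) ^ 2) := by
  have : NeZero n := ⟨by omega⟩
  have h1a : 1 - a = (#{t | y t ≠ yhat t} : ℝ) / n := by
    simpa [ha] using one_sub_card_filter_div_card fun t => y t = yhat t
  have hmse : Δ ^ 2 * (1 - a) ≤ (n : ℝ)⁻¹ * ∑ t, (y t - yhat t) ^ 2 := by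
    rw [h1a, mul_div_assoc', div_eq_inv_mul]
    gcongr
    exact sq_mul_card_ne_le_sum_sq_sub y yhat hΔ.le herr
  calc Δ * Real.sqrt (1 - a) = Real.sqrt (Δ ^ 2 * (1 - a)) := by
        rw [Real.sqrt_mul (sq_nonneg Δ), Real.sqrt_sq hΔ.le]
    _ ≤ _ := Real.sqrt_le_sqrt hmse
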